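/- Let Λ = (Λ_1, …, Λ_n) in ℂ^m be admissible, and let I ⊆ {1,…,n}. The set K_I = {r ∈ K_Λ : r_i = 0 for i ∈ I, r_j > 0 for j ∉ I} is nonempty if and only if 0 belongs to the convex hull of {Λ_j : j ∉ I}. -/

import Mathlib

/-!
If `0` is a convex combination of the `Λ j`, `j ∉ I`, Carathéodory's theorem writes it with
strictly positive weights on an affinely independent subfamily. Weak hyperbolicity (`0` is not in
the hull of any `2m` of the points) forces this subfamily to have `2m + 1 = dim_ℝ ℂ^m + 1`
members, so it is an affine basis and `0` lies in the interior of the hull. Hence for each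
`j ∉ I` the point `-ε Λ_j` is still in the hull for small `ε > 0`, which gives a point of the face
with positive `j`-th coordinate; averaging these points over `j ∉ I` gives a point of `K_I`.
-/

open Finset Set Filter Topology

section Face

variable {ι E : Type*} [Fintype ι] [AddCommGroup E] [Module ℝ E]

def simplexFace (I : Set ι) : Set (ι → ℝ) :=
  {r | (∀ i, 0 ≤ r i) ∧ ∑ i, r i = 1 ∧ ∀ i ∈ I, r i = 0}

theorem convex_simplexFace (I : Set ι) : Convex ℝ (simplexFace I) := by
  rintro r ⟨hr0, hr1, hrI⟩ q ⟨hq0, hq1, hqI⟩ a b ha hb hab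
  refine ⟨fun i => ?_, ?_, fun i hi => ?_⟩
  · simp only [Pi.add_apply, Pi.smul_apply, smul_eq_mul]
    exact add_nonneg (mul_nonneg ha (hr0 i)) (mul_nonneg hb (hq0 i))
  · simp only [Pi.add_apply, Pi.smul_apply, smul_eq_mul, sum_add_distrib, ← mul_sum, hr1, hq1,
      hab, mul_one]
  · simp [hrI i hi, hqI i hi]

theorem mem_convexHull_image_compl_iff {Λ : ι → E} {I : Set ι} {x : E} :
    x ∈ convexHull ℝ (Λ '' Iᶜ) ↔ ∃ r ∈ simplexFace I, ∑ i, r i • Λ i = x := by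
  classical
  constructor
  · intro hx
    let Φ : (ι → ℝ) →ₗ[ℝ] E := Fintype.linearCombination ℝ Λ
    have hsub : Λ '' Iᶜ ⊆ Φ '' simplexFace I := by
      rintro _ ⟨j, hj, rfl⟩
      refine ⟨Pi.single j 1, ⟨fun i => ?_, by simp, fun i hi => ?_⟩, by simp [Φ]⟩
      · by_cases h : i = j <;> simp [h]
      · simp [show i ≠ j from fun h => hj (h ▸ hi)]
    obtain ⟨r, hr, rfl⟩ := convexHull_min hsub ((convex_simplexFace I).linear_image Φ) hx
    exact ⟨r, hr, by simp [Φ, Fintype.linearCombination_apply]⟩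
  · rintro ⟨r, ⟨hr0, hr1, hrI⟩, rfl⟩
    have hsupp : ∀ i, r i ≠ 0 → i ∉ I := fun i hr hi => hr (hrI i hi)
    have hsum := (convex_convexHull ℝ (Λ '' Iᶜ)).sum_mem (t := univ.filter (· ∉ I)) (w := r)
      (fun i _ => hr0 i) (by rwa [sum_filter_of_ne fun i _ => hsupp i])
      (fun i hi => subset_convexHull ℝ _ ⟨i, (mem_filter.1 hi).2, rfl⟩)
    rwa [sum_filter_of_ne fun i _ hi => hsupp i (by rintro h; simp [h] at hi)] at hsum

/-- The face `{r ∈ K_Λ | r_i = 0 for i ∈ I}` of the polytope `K_Λ`. -/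
def polytopeFace (Λ : ι → E) (I : Set ι) : Set (ι → ℝ) :=
  {r ∈ simplexFace I | ∑ i, r i • Λ i = 0}

theorem convex_polytopeFace (Λ : ι → E) (I : Set ι) : Convex ℝ (polytopeFace Λ I) := by
  refine (convex_simplexFace I).inter (t := {r | ∑ i, r i • Λ i = 0}) ?_
  have hker : (LinearMap.ker (Fintype.linearCombination ℝ Λ) : Set (ι → ℝ)) =
      {r | ∑ i, r i • Λ i = 0} := by
    ext r
    simp [Fintype.linearCombination_apply]
  rw [← hker]
  exact Submodule.convex _

end Face

theorem Convex.exists_forall_pos {ι : Type*} [Fintype ι] {C : Set (ι → ℝ)} (hC : Convex ℝ C)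
    (hne : C.Nonempty) (hnonneg : ∀ r ∈ C, 0 ≤ r) {s : Set ι} (hpos : ∀ j ∈ s, ∃ r ∈ C, 0 < r j) :
    ∃ r ∈ C, ∀ j ∈ s, 0 < r j := by
  obtain ⟨r₀, hr₀⟩ := hne
  cases isEmpty_or_nonempty ι
  · exact ⟨r₀, hr₀, fun j => isEmptyElim j⟩
  have hW : ∀ j, ∃ r ∈ C, j ∈ s → 0 < r j := fun j => by
    by_cases hj : j ∈ s
    · obtain ⟨r, hr, hrj⟩ := hpos j hj
      exact ⟨r, hr, fun _ => hrj⟩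
    · exact ⟨r₀, hr₀, fun h => absurd h hj⟩
  choose W hWC hWpos using hW
  have hcard : (0 : ℝ) < Fintype.card ι := by exact_mod_cast Fintype.card_pos
  refine ⟨∑ j, (Fintype.card ι : ℝ)⁻¹ • W j, hC.sum_mem (fun _ _ => by positivity) ?_
    (fun j _ => hWC j), fun j hj => ?_⟩
  · simp [card_univ, hcard.ne']
  · simp only [Finset.sum_apply, Pi.smul_apply, smul_eq_mul]
    exact sum_pos' (fun k _ => mul_nonneg (by positivity) (hnonneg _ (hWC k) j))
      ⟨j, mem_univ j, mul_pos (by positivity) (hWpos j hj)⟩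

theorem mem_interior_convexHull_of_forall_card_le_finrank {ι E : Type*} [NormedAddCommGroup E]
    [NormedSpace ℝ E] [FiniteDimensional ℝ E] {Λ : ι → E} {s : Set ι} {x : E}
    (hx : x ∈ convexHull ℝ (Λ '' s))
    (hsmall : ∀ J : Finset ι, #J ≤ Module.finrank ℝ E → x ∉ convexHull ℝ (Λ '' J)) :
    x ∈ interior (convexHull ℝ (Λ '' s)) := by
  classical
  obtain ⟨κ, _, z, c, hzs, hz, hc0, hc1, hcz⟩ := eq_pos_convex_span_of_mem_convexHull hx
  have hx_eq : univ.affineCombination ℝ z c = x := by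
    rw [affineCombination_eq_linear_combination _ _ _ hc1, hcz]
  have hcard : Fintype.card κ = Module.finrank ℝ E + 1 := by
    refine le_antisymm (hz.card_le_finrank_succ.trans (by grw [Submodule.finrank_le]))
      (Nat.succ_le_of_lt ?_)
    by_contra! hle
    choose σ hσ using fun i => hzs (mem_range_self i)
    refine hsmall (univ.image σ) (card_image_le.trans hle) ?_
    rw [← hx_eq]
    refine convexHull_mono ?_ (affineCombination_mem_convexHull (fun i _ => (hc0 i).le) hc1)
    rintro _ ⟨i, rfl⟩
    exact ⟨σ i, by simp, (hσ i).2⟩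
  let b : AffineBasis κ ℝ E :=
    ⟨z, hz, hz.affineSpan_eq_top_iff_card_eq_finrank_add_one.2 hcard⟩
  have hxb : x ∈ interior (convexHull ℝ (range b)) := by
    rw [b.interior_convexHull]
    intro i
    rw [← hx_eq]
    exact (hc0 i).trans_eq (b.coord_apply_combination_of_mem (mem_univ i) hc1).symm
  exact interior_mono (convexHull_mono hzs) hxb

theorem exists_mem_polytopeFace_pos_of_mem_interior {ι E : Type*} [Fintype ι]
    [NormedAddCommGroup E] [NormedSpace ℝ E] {Λ : ι → E} {I : Set ι}
    (h : (0 : E) ∈ interior (convexHull ℝ (Λ '' Iᶜ))) {j : ι} (hj : j ∉ I) :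
    ∃ r ∈ polytopeFace Λ I, 0 < r j := by
  classical
  have hnear : ∀ᶠ t : ℝ in 𝓝 0, -(t • Λ j) ∈ convexHull ℝ (Λ '' Iᶜ) := by
    have hcont : Continuous fun t : ℝ => -(t • Λ j) := by fun_prop
    exact hcont.tendsto' 0 0 (by simp) (mem_interior_iff_mem_nhds.1 h)
  obtain ⟨ε, hmem, hε⟩ :=
    ((hnear.filter_mono nhdsWithin_le_nhds).and (self_mem_nhdsWithin (s := Ioi 0))).exists
  obtain ⟨q, ⟨hq0, hq1, hqI⟩, hqΛ⟩ := mem_convexHull_image_compl_iff.1 hmem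
  have hε : (0 : ℝ) < ε := hε
  -- `∑ q i • Λ i = -(ε • Λ j)`, so adding `ε` to the `j`-th weight and renormalising gives `0`.
  refine ⟨(1 + ε)⁻¹ • (q + Pi.single j ε), ⟨⟨fun i => ?_, ?_, fun i hi => ?_⟩, ?_⟩, ?_⟩
  · have : 0 ≤ Pi.single (M := fun _ => ℝ) j ε i := by
      by_cases h : i = j <;> simp [h, hε.le]
    simp only [Pi.smul_apply, Pi.add_apply, smul_eq_mul]
    exact mul_nonneg (by positivity) (add_nonneg (hq0 i) this)
  · simp only [Pi.smul_apply, Pi.add_apply, smul_eq_mul, ← mul_sum, sum_add_distrib, hq1,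
      Fintype.sum_pi_single']
    field_simp
  · simp [hqI i hi, show i ≠ j from fun h => hj (h ▸ hi)]
  · simp [mul_smul, add_smul, ← smul_sum, sum_add_distrib, hqΛ]
  · simp only [Pi.smul_apply, Pi.add_apply, Pi.single_eq_same, smul_eq_mul]
    exact mul_pos (by positivity) (add_pos_of_nonneg_of_pos (hq0 j) hε)

theorem stmt_9_general (m n : ℕ) (Λ : Fin n → (Fin m → ℂ))
    (hWH : ∀ J : Finset (Fin n), J.card ≤ 2 * m →
      (0 : Fin m → ℂ) ∉ convexHull ℝ (Λ '' J))
    (I : Set (Fin n)) :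
    {r : Fin n → ℝ | (∀ i, 0 ≤ r i) ∧ ∑ i, r i • Λ i = 0 ∧ ∑ i, r i = 1 ∧
        (∀ i ∈ I, r i = 0) ∧ (∀ j ∉ I, 0 < r j)}.Nonempty ↔
      (0 : Fin m → ℂ) ∈ convexHull ℝ (Λ '' Iᶜ) := by
  constructor
  · rintro ⟨r, hr0, hrΛ, hr1, hrI, -⟩
    exact mem_convexHull_image_compl_iff.2 ⟨r, ⟨hr0, hr1, hrI⟩, hrΛ⟩
  · intro h0
    have hdim : Module.finrank ℝ (Fin m → ℂ) = 2 * m := by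
      simp [Module.finrank_pi_fintype, mul_comm]
    have hint : (0 : Fin m → ℂ) ∈ interior (convexHull ℝ (Λ '' Iᶜ)) :=
      mem_interior_convexHull_of_forall_card_le_finrank h0 fun J hJ => hWH J (hdim ▸ hJ)
    obtain ⟨r₀, hr₀⟩ := mem_convexHull_image_compl_iff.1 h0
    obtain ⟨r, ⟨⟨hr0, hr1, hrI⟩, hrΛ⟩, hpos⟩ :=
      (convex_polytopeFace Λ I).exists_forall_pos ⟨r₀, hr₀⟩ (fun r hr => hr.1.1)
        fun j hj => exists_mem_polytopeFace_pos_of_mem_interior hint hj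
    exact ⟨r, hr0, hrΛ, hr1, hrI, hpos⟩

theorem stmt_9 (m n : ℕ) (Λ : Fin n → (Fin m → ℂ))
    (hSiegel : (0 : Fin m → ℂ) ∈ convexHull ℝ (Set.range Λ))
    (hWH : ∀ J : Finset (Fin n), J.card ≤ 2 * m →
      (0 : Fin m → ℂ) ∉ convexHull ℝ (Λ '' J))
    (I : Set (Fin n)) :
    {r : Fin n → ℝ | (∀ i, 0 ≤ r i) ∧ ∑ i, r i • Λ i = 0 ∧ ∑ i, r i = 1 ∧
        (∀ i ∈ I, r i = 0) ∧ (∀ j ∉ I, 0 < r j)}.Nonempty ↔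
      (0 : Fin m → ℂ) ∈ convexHull ℝ (Λ '' Iᶜ) :=
  stmt_9_general m n Λ hWH I
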